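/- arXiv:1909.10327 — 5 statements merged into one kernel-verified Lean document; each statement's English description precedes it below -/
import Mathlib

section
/- For the scalar quadratic f(x) = x²/2 with compressor Q(z) = z − ε·z/|z| for z ≠ 0 and Q(0) = ε, the compressed gradient iteration x^{k+1} = x^k − γ·Q(x^k) with step size γ ∈ (0,1] and initial point |x⁰| > ε satisfies |x^{k+1}| = (1−γ)^{k+1}(|x⁰| − ε) + ε for all k, and in particular |x^k| ≥ ε for all k. -/
theorem stmt_0 (ε γ : ℝ) (hε : 0 < ε) (hγ : 0 < γ) (hγ1 : γ ≤ 1)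
    (Q : ℝ → ℝ) (hQ : ∀ z : ℝ, z ≠ 0 → Q z = z - ε * (z / |z|)) (hQ0 : Q 0 = ε)
    (x : ℕ → ℝ) (hx0 : ε < |x 0|)
    (hiter : ∀ k : ℕ, x (k + 1) = x k - γ * Q (x k)) :
    (∀ k : ℕ, |x (k + 1)| = (1 - γ) ^ (k + 1) * (|x 0| - ε) + ε) ∧
    (∀ k : ℕ, ε ≤ |x k|) := by
  have hγ0 : 0 ≤ 1 - γ := by linarith
  have key : ∀ k : ℕ, |x k| = (1 - γ) ^ k * (|x 0| - ε) + ε := by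
    intro k
    induction k with
    | zero => simp
    | succ n ih =>
      have hge : ε ≤ |x n| := by
        rw [ih]
        have : 0 ≤ (1 - γ) ^ n * (|x 0| - ε) :=
          mul_nonneg (pow_nonneg hγ0 n) (by linarith)
        linarith
      have hne : x n ≠ 0 := by
        intro h
        rw [h, abs_zero] at hge
        linarith
      have habs : |x n| ≠ 0 := abs_ne_zero.mpr hne
      have hstep : x (n + 1) = x n * (1 - γ + γ * (ε / |x n|)) := by
        rw [hiter n, hQ (x n) hne]
        field_simp
        ring
      have hfac : 0 ≤ 1 - γ + γ * (ε / |x n|) := by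
        have : 0 ≤ γ * (ε / |x n|) :=
          mul_nonneg hγ.le (div_nonneg hε.le (abs_nonneg _))
        linarith
      have : |x (n + 1)| = |x n| * (1 - γ + γ * (ε / |x n|)) := by
        rw [hstep, abs_mul, abs_of_nonneg hfac]
      have h2 : |x n| * (1 - γ + γ * (ε / |x n|)) = (1 - γ) * |x n| + γ * ε := by
        field_simp
      rw [this, h2, ih]
      ring
  refine ⟨fun k => key (k + 1), fun k => ?_⟩
  rw [key k]
  have : 0 ≤ (1 - γ) ^ k * (|x 0| - ε) :=
    mul_nonneg (pow_nonneg hγ0 k) (by linarith)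
  linarith
end

section
/- Under the same setting, the compressed gradient iteration contracts exactly to the residual level ε: for every k ∈ ℕ, |x^{k+1}| = (1−γ)|x^k| + γε, and hence lim_{k→∞} |x^k| = ε. -/
theorem stmt_1 (ε γ : ℝ) (hε : 0 < ε) (hγ : 0 < γ) (hγ1 : γ ≤ 1)
    (Q : ℝ → ℝ) (hQ : ∀ z : ℝ, z ≠ 0 → Q z = z - ε * (z / |z|)) (hQ0 : Q 0 = ε)
    (x : ℕ → ℝ) (hx0 : ε < |x 0|)
    (hiter : ∀ k : ℕ, x (k + 1) = x k - γ * Q (x k)) :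
    (∀ k : ℕ, |x (k + 1)| = (1 - γ) * |x k| + γ * ε) ∧
    Filter.Tendsto (fun k : ℕ => |x k|) Filter.atTop (nhds ε) := by
  have key : ∀ k : ℕ, ε ≤ |x k| ∧ |x (k + 1)| = (1 - γ) * |x k| + γ * ε := by
    intro k
    induction k with
    | zero =>
      constructor
      · exact hx0.le
      · have hne : x 0 ≠ 0 := by
          intro h; rw [h, abs_zero] at hx0; linarith
        have habs : (0:ℝ) < |x 0| := lt_trans hε hx0
        have : x 1 = (1 - γ + γ * ε / |x 0|) * x 0 := by
          rw [hiter 0, hQ (x 0) hne]; field_simp; ring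
        rw [show (0:ℕ)+1 = 1 from rfl, this, abs_mul]
        have hpos : (0:ℝ) ≤ γ * ε / |x 0| := by positivity
        have hc : (0:ℝ) ≤ 1 - γ + γ * ε / |x 0| := by linarith
        rw [abs_of_nonneg hc]
        field_simp
    | succ n ih =>
      obtain ⟨h1, h2⟩ := ih
      have h3 : ε ≤ |x (n + 1)| := by
        rw [h2]; nlinarith
      refine ⟨h3, ?_⟩
      have hne : x (n + 1) ≠ 0 := by
        intro h; rw [h, abs_zero] at h3; linarith
      have habs : (0:ℝ) < |x (n + 1)| := lt_of_lt_of_le hε h3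
      have : x (n + 2) = (1 - γ + γ * ε / |x (n + 1)|) * x (n + 1) := by
        rw [hiter (n + 1), hQ (x (n + 1)) hne]; field_simp; ring
      rw [show n+1+1 = n+2 from rfl, this, abs_mul]
      have hpos : (0:ℝ) ≤ γ * ε / |x (n + 1)| := by positivity
      have hc : (0:ℝ) ≤ 1 - γ + γ * ε / |x (n + 1)| := by linarith
      rw [abs_of_nonneg hc]
      field_simp
  refine ⟨fun k => (key k).2, ?_⟩
  have hform : ∀ k : ℕ, |x k| = ε + (1 - γ) ^ k * (|x 0| - ε) := by
    intro k
    induction k with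
    | zero => simp
    | succ n ih =>
      rw [(key n).2, ih]
      ring
  have hlim : Filter.Tendsto (fun k : ℕ => (1 - γ) ^ k * (|x 0| - ε))
      Filter.atTop (nhds 0) := by
    have := tendsto_pow_atTop_nhds_zero_of_lt_one (by linarith : (0:ℝ) ≤ 1 - γ)
      (by linarith : 1 - γ < 1)
    simpa using this.mul_const (|x 0| - ε)
  have : Filter.Tendsto (fun k : ℕ => ε + (1 - γ) ^ k * (|x 0| - ε))
      Filter.atTop (nhds (ε + 0)) := Filter.Tendsto.const_add ε hlim
  rw [add_zero] at this
  exact this.congr (fun k => (hform k).symm)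
end

section
/- Consider f(x) = (1/2)xᵀHx + bᵀx with H symmetric positive definite with eigenvalues in [μ, L], and Q an ε-compressor. Then the compressed gradient iterates with step size γ = 2/(μ+L) satisfy ‖x^k − x*‖ ≤ (1 − 2/(κ+1))^k ‖x⁰ − x*‖ + ε/μ, where κ = L/μ. -/
open Matrix

lemma contract_key (d : ℕ) (H : Matrix (Fin d) (Fin d) ℝ) (hH : H.IsHermitian)
    (μ L : ℝ) (hμ : 0 < μ) (hμL : μ ≤ L)
    (hev : ∀ i : Fin d, μ ≤ hH.eigenvalues i ∧ hH.eigenvalues i ≤ L)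
    (γ : ℝ) (hγ : γ = 2 / (μ + L)) (v : EuclideanSpace ℝ (Fin d)) :
    ‖v - γ • (Matrix.toEuclideanLin H v)‖ ≤ (L - μ) / (L + μ) * ‖v‖ := by
  have hμL0 : 0 < μ + L := by linarith
  set q : ℝ := (L - μ) / (L + μ) with hq
  have hq0 : 0 ≤ q := div_nonneg (by linarith) (by linarith)
  set B := hH.eigenvectorBasis with hB
  set w := v - γ • (Matrix.toEuclideanLin H v) with hw
  -- repr of w
  have hrepr : ∀ i, B.repr w i = (1 - γ * hH.eigenvalues i) * B.repr v i := by
    intro i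
    have hAB : Matrix.toEuclideanLin H (B i) = hH.eigenvalues i • B i := by
      have := hH.mulVec_eigenvectorBasis i
      apply (WithLp.equiv 2 (Fin d → ℝ)).injective
      simpa [Matrix.toEuclideanLin_apply] using this
    have hsym := (Matrix.isHermitian_iff_isSymmetric.1 hH)
    have h1 : B.repr (Matrix.toEuclideanLin H v) i = hH.eigenvalues i * B.repr v i := by
      rw [B.repr_apply_apply, B.repr_apply_apply]
      rw [← hsym (B i) v, hAB, inner_smul_left]
      simp
    simp [hw, map_sub, _root_.map_smul, h1]
    ring
  -- bound each coordinate
  have hcoef : ∀ i, |1 - γ * hH.eigenvalues i| ≤ q := by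
    intro i
    obtain ⟨h1, h2⟩ := hev i
    have hrw : 1 - γ * hH.eigenvalues i = (μ + L - 2 * hH.eigenvalues i) / (μ + L) := by
      rw [hγ]; field_simp
    have hnum : |μ + L - 2 * hH.eigenvalues i| ≤ L - μ := by
      rw [abs_le]; constructor <;> linarith
    calc |1 - γ * hH.eigenvalues i| = |μ + L - 2 * hH.eigenvalues i| / (μ + L) := by
          rw [hrw, abs_div, abs_of_pos hμL0]
      _ ≤ (L - μ) / (μ + L) := by gcongr
      _ = q := by rw [hq, add_comm]
  -- norms via repr
  have hnw : ‖w‖ ^ 2 = ∑ i, (B.repr w i) ^ 2 := by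
    rw [← B.repr.norm_map w, EuclideanSpace.norm_eq, Real.sq_sqrt (by positivity)]
    simp [sq_abs]
  have hnv : ‖v‖ ^ 2 = ∑ i, (B.repr v i) ^ 2 := by
    rw [← B.repr.norm_map v, EuclideanSpace.norm_eq, Real.sq_sqrt (by positivity)]
    simp [sq_abs]
  have hsq : ‖w‖ ^ 2 ≤ (q * ‖v‖) ^ 2 := by
    rw [hnw, mul_pow, hnv, Finset.mul_sum]
    apply Finset.sum_le_sum
    intro i _
    rw [hrepr i, mul_pow]
    have := hcoef i
    have h2 : (1 - γ * hH.eigenvalues i) ^ 2 ≤ q ^ 2 := by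
      rw [← sq_abs]
      exact pow_le_pow_left₀ (abs_nonneg _) this 2
    nlinarith [sq_nonneg (B.repr v i)]
  calc ‖w‖ = Real.sqrt (‖w‖ ^ 2) := by rw [Real.sqrt_sq (norm_nonneg _)]
    _ ≤ Real.sqrt ((q * ‖v‖) ^ 2) := Real.sqrt_le_sqrt hsq
    _ = q * ‖v‖ := Real.sqrt_sq (by positivity)

theorem stmt_4 (d : ℕ) (H : Matrix (Fin d) (Fin d) ℝ) (hH : H.IsHermitian)
    (μ L : ℝ) (hμ : 0 < μ) (hμL : μ ≤ L)
    (hev : ∀ i : Fin d, μ ≤ hH.eigenvalues i ∧ hH.eigenvalues i ≤ L)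
    (b : EuclideanSpace ℝ (Fin d)) (ε : ℝ)
    (Q : EuclideanSpace ℝ (Fin d) → EuclideanSpace ℝ (Fin d))
    (hQ : ∀ v : EuclideanSpace ℝ (Fin d), ‖Q v - v‖ ≤ ε)
    (xstar : EuclideanSpace ℝ (Fin d))
    (hstar : Matrix.toEuclideanLin H xstar + b = 0)
    (γ : ℝ) (hγ : γ = 2 / (μ + L))
    (x : ℕ → EuclideanSpace ℝ (Fin d))
    (hiter : ∀ k : ℕ, x (k + 1) = x k - γ • Q (Matrix.toEuclideanLin H (x k) + b)) :
    ∀ k : ℕ, ‖x k - xstar‖ ≤ (1 - 2 / (L / μ + 1)) ^ k * ‖x 0 - xstar‖ + ε / μ := by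
  have hμL0 : 0 < μ + L := by linarith
  have hγ0 : 0 < γ := by rw [hγ]; positivity
  set q : ℝ := (L - μ) / (L + μ) with hq
  have hq0 : 0 ≤ q := div_nonneg (by linarith) (by linarith)
  have hqe : 1 - 2 / (L / μ + 1) = q := by
    rw [hq, show L / μ + 1 = (L + μ) / μ by field_simp, div_div_eq_mul_div]
    rw [eq_div_iff (by linarith : (L + μ) ≠ 0), sub_mul,
      div_mul_cancel₀ _ (by linarith : (L + μ) ≠ 0)]
    ring
  have hε0 : 0 ≤ ε := le_trans (norm_nonneg _) (hQ 0)
  -- one-step bound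
  have hstep : ∀ k, ‖x (k+1) - xstar‖ ≤ q * ‖x k - xstar‖ + γ * ε := by
    intro k
    set g := Matrix.toEuclideanLin H (x k) + b with hg
    have hge : g = Matrix.toEuclideanLin H (x k - xstar) := by
      rw [map_sub]
      rw [hg, eq_neg_of_add_eq_zero_left hstar, sub_neg_eq_add]
    have hdecomp : x (k+1) - xstar
        = ((x k - xstar) - γ • Matrix.toEuclideanLin H (x k - xstar)) - γ • (Q g - g) := by
      rw [hiter k, ← hge]
      module
    rw [hdecomp]
    calc ‖((x k - xstar) - γ • Matrix.toEuclideanLin H (x k - xstar)) - γ • (Q g - g)‖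
        ≤ ‖(x k - xstar) - γ • Matrix.toEuclideanLin H (x k - xstar)‖ + ‖γ • (Q g - g)‖ :=
          norm_sub_le _ _
      _ ≤ q * ‖x k - xstar‖ + γ * ε := by
          gcongr
          · exact contract_key d H hH μ L hμ hμL hev γ hγ _
          · rw [norm_smul, Real.norm_eq_abs, abs_of_pos hγ0]
            exact mul_le_mul_of_nonneg_left (hQ g) hγ0.le
  -- induction
  intro k
  rw [hqe]
  induction k with
  | zero => simp; positivity
  | succ k ih =>
    have h1 := hstep k
    have h2 : q * ‖x k - xstar‖ + γ * ε ≤ q * (q ^ k * ‖x 0 - xstar‖ + ε / μ) + γ * ε :=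
      by gcongr
    have h3 : q * (q ^ k * ‖x 0 - xstar‖ + ε / μ) + γ * ε
        = q ^ (k+1) * ‖x 0 - xstar‖ + (q * (ε / μ) + γ * ε) := by ring
    have h4 : q * (ε / μ) + γ * ε = ε / μ := by
      have hA : (L + μ) * μ ≠ 0 := (by nlinarith : (0:ℝ) < (L + μ) * μ).ne'
      have hB : (μ + L) ≠ 0 := hμL0.ne'
      rw [hq, hγ, div_mul_div_comm, div_mul_eq_mul_div, div_add_div _ _ hA hB,
        div_eq_div_iff (mul_ne_zero hA hB) hμ.ne']
      ring
    linarith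
end

section
/- Let f be L-smooth and bounded below by f*. If x^{k+1} = x^k − γ·Q(∇f(x^k)) where Q is an ε-compressor and γ ∈ (0, 1/(4L)), then min_{0 ≤ l ≤ k} ‖∇f(x^l)‖² ≤ (2/(γ(1−4Lγ)(k+1)))·(f(x⁰) − f*) + ((1+4Lγ)/(1−4Lγ))·ε². -/
open InnerProductSpace Finset

local notation "⟪" x ", " y "⟫" => @inner ℝ _ _ x y

lemma descent_lemma {d : ℕ} (f : EuclideanSpace ℝ (Fin d) → ℝ)
    (f' : EuclideanSpace ℝ (Fin d) → EuclideanSpace ℝ (Fin d))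
    (hf : ∀ x, HasGradientAt f (f' x) x)
    (L : ℝ) (hL0 : 0 ≤ L)
    (hlip : ∀ x y, ‖f' x - f' y‖ ≤ L * ‖x - y‖)
    (a b : EuclideanSpace ℝ (Fin d)) :
    f b ≤ f a + ⟪f' a, b - a⟫ + L * ‖b - a‖ ^ 2 := by
  have key : ‖f b - f a - (toDual ℝ (EuclideanSpace ℝ (Fin d)) (f' a)) (b - a)‖
      ≤ (L * ‖b - a‖) * ‖b - a‖ := by
    apply Convex.norm_image_sub_le_of_norm_hasFDerivWithin_le'
      (f' := fun z => toDual ℝ (EuclideanSpace ℝ (Fin d)) (f' z))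
      (fun z _ => ((hf z).hasFDerivAt).hasFDerivWithinAt)
      ?_ (convex_segment a b) (left_mem_segment ℝ a b) (right_mem_segment ℝ a b)
    intro z hz
    rw [segment_eq_image'] at hz
    obtain ⟨t, ht, rfl⟩ := hz
    have : ‖(toDual ℝ (EuclideanSpace ℝ (Fin d)) (f' (a + t • (b - a)))) -
        (toDual ℝ (EuclideanSpace ℝ (Fin d)) (f' a))‖
        = ‖f' (a + t • (b - a)) - f' a‖ := by
      rw [← map_sub]
      exact (toDual ℝ (EuclideanSpace ℝ (Fin d))).norm_map _
    rw [this]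
    calc ‖f' (a + t • (b - a)) - f' a‖ ≤ L * ‖a + t • (b - a) - a‖ := hlip _ _
      _ ≤ L * ‖b - a‖ := by
          apply mul_le_mul_of_nonneg_left _ hL0
          rw [add_sub_cancel_left, norm_smul]
          calc ‖t‖ * ‖b - a‖ ≤ 1 * ‖b - a‖ := by
                apply mul_le_mul_of_nonneg_right _ (norm_nonneg _)
                rw [Real.norm_eq_abs, abs_le]; constructor <;> [linarith [ht.1]; exact ht.2]
            _ = ‖b - a‖ := one_mul _
  have hdual : (toDual ℝ (EuclideanSpace ℝ (Fin d)) (f' a)) (b - a) = ⟪f' a, b - a⟫ := rfl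
  rw [hdual] at key
  have := (abs_le.mp (by rwa [Real.norm_eq_abs] at key)).2
  nlinarith [this]

theorem stmt_10 (d : ℕ) (f : EuclideanSpace ℝ (Fin d) → ℝ)
    (f' : EuclideanSpace ℝ (Fin d) → EuclideanSpace ℝ (Fin d))
    (hf : ∀ x, HasGradientAt f (f' x) x)
    (L : ℝ) (hL : 0 < L)
    (hlip : ∀ x y, ‖f' x - f' y‖ ≤ L * ‖x - y‖)
    (fstar : ℝ) (hbdd : ∀ x, fstar ≤ f x)
    (ε : ℝ) (Q : EuclideanSpace ℝ (Fin d) → EuclideanSpace ℝ (Fin d))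
    (hQ : ∀ v, ‖Q v - v‖ ≤ ε)
    (γ : ℝ) (hγ0 : 0 < γ) (hγ : γ < 1 / (4 * L))
    (x : ℕ → EuclideanSpace ℝ (Fin d))
    (hiter : ∀ k : ℕ, x (k + 1) = x k - γ • Q (f' (x k))) :
    ∀ k : ℕ, ∃ l ≤ k,
      ‖f' (x l)‖ ^ 2 ≤
        2 / (γ * (1 - 4 * L * γ) * (k + 1)) * (f (x 0) - fstar) +
          (1 + 4 * L * γ) / (1 - 4 * L * γ) * ε ^ 2 := by
  have hε : 0 ≤ ε := le_trans (norm_nonneg _) (hQ 0)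
  have h4 : 0 < 1 - 4 * L * γ := by
    have : γ * (4 * L) < 1 := by
      rw [← lt_div_iff₀ (by positivity)]; exact hγ
    nlinarith
  set A : ℝ := γ / 2 * (1 - 4 * L * γ) with hA
  set B : ℝ := γ / 2 * (1 + 4 * L * γ) with hB
  have hA0 : 0 < A := by positivity
  have hB0 : 0 < B := by positivity
  -- per-step descent
  have step : ∀ k : ℕ, f (x (k + 1)) ≤ f (x k) - A * ‖f' (x k)‖ ^ 2 + B * ε ^ 2 := by
    intro k
    set g := f' (x k)
    set q := Q g
    have hd := descent_lemma f f' hf L hL.le hlip (x k) (x (k + 1))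
    have hxd : x (k + 1) - x k = -(γ • q) := by rw [hiter k]; abel
    rw [hxd] at hd
    have hinner : ⟪g, -(γ • q)⟫ = -(γ * ⟪g, q⟫) := by
      rw [inner_neg_right, real_inner_smul_right]
    have hnorm : ‖-(γ • q)‖ ^ 2 = γ ^ 2 * ‖q‖ ^ 2 := by
      rw [norm_neg, norm_smul, Real.norm_eq_abs, abs_of_pos hγ0]; ring
    rw [hinner, hnorm] at hd
    have he : ‖q - g‖ ≤ ε := hQ g
    have h1 : ⟪g, q⟫ ≥ ‖g‖ ^ 2 / 2 - ε ^ 2 / 2 := by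
      have : ⟪g, q⟫ = ‖g‖ ^ 2 + ⟪g, q - g⟫ := by
        rw [inner_sub_right, real_inner_self_eq_norm_sq]; ring
      have habs : |⟪g, q - g⟫| ≤ ‖g‖ * ε :=
        le_trans (abs_real_inner_le_norm _ _)
          (mul_le_mul_of_nonneg_left he (norm_nonneg _))
      nlinarith [abs_le.mp habs, sq_nonneg (‖g‖ - ε)]
    have h2 : ‖q‖ ^ 2 ≤ 2 * ‖g‖ ^ 2 + 2 * ε ^ 2 := by
      have : ‖q‖ ≤ ‖g‖ + ε := by
        calc ‖q‖ = ‖g + (q - g)‖ := by rw [add_sub_cancel]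
          _ ≤ ‖g‖ + ‖q - g‖ := norm_add_le _ _
          _ ≤ ‖g‖ + ε := by linarith
      nlinarith [norm_nonneg q, norm_nonneg g, sq_nonneg (‖g‖ - ε)]
    nlinarith [hd, mul_le_mul_of_nonneg_left h2 (mul_pos (mul_pos hL (mul_pos hγ0 hγ0)) (by norm_num : (0:ℝ) < 1)).le]
  -- summed inequality
  have sum_ineq : ∀ k : ℕ,
      A * ∑ l ∈ range (k + 1), ‖f' (x l)‖ ^ 2 ≤
        f (x 0) - f (x (k + 1)) + (k + 1) * (B * ε ^ 2) := by
    intro k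
    induction k with
    | zero => simpa using by linarith [step 0]
    | succ n ih =>
        rw [sum_range_succ, mul_add]
        push_cast
        push_cast at ih
        linarith [step (n + 1)]
  intro k
  obtain ⟨l, hl, hmin⟩ := Finset.exists_min_image (range (k + 1))
    (fun l => ‖f' (x l)‖ ^ 2) (by simp)
  refine ⟨l, Nat.lt_succ_iff.mp (Finset.mem_range.mp hl), ?_⟩
  have hcard : ((k : ℝ) + 1) * ‖f' (x l)‖ ^ 2 ≤ ∑ j ∈ range (k + 1), ‖f' (x j)‖ ^ 2 := by
    calc ((k : ℝ) + 1) * ‖f' (x l)‖ ^ 2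
        = ∑ _j ∈ range (k + 1), ‖f' (x l)‖ ^ 2 := by
          rw [sum_const, card_range]; push_cast; ring
      _ ≤ ∑ j ∈ range (k + 1), ‖f' (x j)‖ ^ 2 :=
          sum_le_sum fun j hj => hmin j hj
  have hsum := sum_ineq k
  have hfk : fstar ≤ f (x (k + 1)) := hbdd _
  have hk1 : (0:ℝ) < (k : ℝ) + 1 := by positivity
  -- combine
  have key : A * (((k : ℝ) + 1) * ‖f' (x l)‖ ^ 2) ≤
      f (x 0) - fstar + ((k : ℝ) + 1) * (B * ε ^ 2) := by
    have := mul_le_mul_of_nonneg_left hcard hA0.le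
    calc A * (((k : ℝ) + 1) * ‖f' (x l)‖ ^ 2)
        ≤ A * ∑ j ∈ range (k + 1), ‖f' (x j)‖ ^ 2 := this
      _ ≤ f (x 0) - f (x (k + 1)) + ((k : ℝ) + 1) * (B * ε ^ 2) := by
          exact hsum
      _ ≤ f (x 0) - fstar + ((k : ℝ) + 1) * (B * ε ^ 2) := by linarith
  have final : ‖f' (x l)‖ ^ 2 ≤
      (f (x 0) - fstar + ((k : ℝ) + 1) * (B * ε ^ 2)) / (A * ((k : ℝ) + 1)) := by
    rw [le_div_iff₀ (by positivity)]
    have : ‖f' (x l)‖ ^ 2 * (A * ((k : ℝ) + 1)) =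
        A * (((k : ℝ) + 1) * ‖f' (x l)‖ ^ 2) := by ring
    linarith
  calc ‖f' (x l)‖ ^ 2
      ≤ (f (x 0) - fstar + ((k : ℝ) + 1) * (B * ε ^ 2)) / (A * ((k : ℝ) + 1)) := final
    _ = 2 / (γ * (1 - 4 * L * γ) * (k + 1)) * (f (x 0) - fstar) +
          (1 + 4 * L * γ) / (1 - 4 * L * γ) * ε ^ 2 := by
        rw [hA, hB]
        field_simp
end

section
/- For the scalar sequence x^{k+1} = x^k − γ·Q(x^k) of Example 1 (γ ∈ (0,1], |x⁰| > ε, Q(z) = z − ε·sign(z)), the averaged iterate x̄^k = (1/(k+1))·Σ_{l=0}^k x^l satisfies f(x̄^k) − f(x*) ≥ ε²/2 for the objective f(x) = x²/2 with minimizer x* = 0. -/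
theorem stmt_14 (ε γ : ℝ) (hε : 0 < ε) (hγ : 0 < γ) (hγ1 : γ ≤ 1)
    (Q : ℝ → ℝ) (hQ : ∀ z : ℝ, z ≠ 0 → Q z = z - ε * (z / |z|)) (hQ0 : Q 0 = ε)
    (x : ℕ → ℝ) (hx0 : ε < |x 0|)
    (hiter : ∀ k : ℕ, x (k + 1) = x k - γ * Q (x k))
    (f : ℝ → ℝ) (hf : ∀ t, f t = t ^ 2 / 2) :
    ∀ k : ℕ,
      ε ^ 2 / 2 ≤ f ((1 / ((k : ℝ) + 1)) * ∑ l ∈ Finset.range (k + 1), x l) - f 0 := by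
  intro k
  have key : (∀ l, ε ≤ x l) ∨ (∀ l, x l ≤ -ε) := by
    rcases lt_or_ge 0 (x 0) with h0 | h0
    · left
      intro l
      induction l with
      | zero =>
        have : |x 0| = x 0 := abs_of_pos h0
        linarith [hx0]
      | succ n ih =>
        have hne : x n ≠ 0 := ne_of_gt (lt_of_lt_of_le hε ih)
        have habs : |x n| = x n := abs_of_pos (lt_of_lt_of_le hε ih)
        have hQn : Q (x n) = x n - ε := by
          rw [hQ _ hne, habs, div_self hne]; ring
        rw [hiter n, hQn]
        nlinarith
    · right
      have h0' : x 0 < 0 := by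
        rcases lt_or_eq_of_le h0 with h | h
        · exact h
        · exfalso; rw [h] at hx0; simp at hx0; linarith
      intro l
      induction l with
      | zero =>
        have : |x 0| = -(x 0) := abs_of_neg h0'
        linarith [hx0]
      | succ n ih =>
        have hxn : x n < 0 := lt_of_le_of_lt ih (by linarith)
        have hne : x n ≠ 0 := ne_of_lt hxn
        have habs : |x n| = -(x n) := abs_of_neg hxn
        have hQn : Q (x n) = x n + ε := by
          rw [hQ _ hne, habs]
          field_simp
          ring
        rw [hiter n, hQn]
        nlinarith
  set S := ∑ l ∈ Finset.range (k + 1), x l with hS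
  have hk1 : (0:ℝ) < (k : ℝ) + 1 := by positivity
  have havg : ε ≤ |1 / ((k : ℝ) + 1) * S| := by
    rcases key with h | h
    · have hsum : ((k : ℝ) + 1) * ε ≤ S := by
        calc ((k : ℝ) + 1) * ε = ∑ _l ∈ Finset.range (k + 1), ε := by
              simp [mul_comm]
          _ ≤ S := Finset.sum_le_sum fun i _ => h i
      have : ε ≤ 1 / ((k : ℝ) + 1) * S := by
        rw [div_mul_eq_mul_div, one_mul, le_div_iff₀ hk1]
        linarith [hsum]
      calc ε ≤ 1 / ((k : ℝ) + 1) * S := this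
        _ ≤ |1 / ((k : ℝ) + 1) * S| := le_abs_self _
    · have hsum : S ≤ ((k : ℝ) + 1) * (-ε) := by
        calc S ≤ ∑ _l ∈ Finset.range (k + 1), (-ε) :=
              Finset.sum_le_sum fun i _ => h i
          _ = ((k : ℝ) + 1) * (-ε) := by simp [mul_comm]
      have : 1 / ((k : ℝ) + 1) * S ≤ -ε := by
        rw [div_mul_eq_mul_div, one_mul, div_le_iff₀ hk1]
        linarith [hsum]
      calc ε ≤ -(1 / ((k : ℝ) + 1) * S) := by linarith
        _ ≤ |1 / ((k : ℝ) + 1) * S| := neg_le_abs _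
  have hsq : ε ^ 2 ≤ (1 / ((k : ℝ) + 1) * S) ^ 2 := by
    calc ε ^ 2 ≤ |1 / ((k : ℝ) + 1) * S| ^ 2 :=
          pow_le_pow_left₀ hε.le havg 2
      _ = (1 / ((k : ℝ) + 1) * S) ^ 2 := sq_abs _
  rw [hf, hf, one_div] at *
  norm_num
  linarith [hsq]
end
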